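/- arXiv:2408.11621 — 4 statements merged into one kernel-verified Lean document; each statement's English description precedes it below -/
import Mathlib

section
/- Let Ī > 0 and I̲ < 0 be real numbers with Ī + I̲ > 0, and let s > 0. Define g : ℝ → ℝ by g(c) = (1/2)·max{Ī·Φ((−s² + c)/s), −I̲·Φ((s² − c)/s)} + (1/2)·max{−I̲·Φ((s² + c)/s), Ī·Φ((−s² − c)/s)}, where Φ is the standard normal CDF. Assume Ī/(Ī − I̲) < Φ(s) and set c* = s² − s·Φ⁻¹(Ī/(Ī − I̲)) > 0. Then g is strictly decreasing on [0, c*] and strictly increasing on [c*, ∞). -/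
/-- The standard normal cumulative distribution function. -/
noncomputable def Phi (x : ℝ) : ℝ :=
  ∫ t in Set.Iic x, ProbabilityTheory.gaussianPDFReal 0 1 t

open MeasureTheory ProbabilityTheory Set

lemma gauss_cont : Continuous (gaussianPDFReal 0 1) := by
  rw [gaussianPDFReal_def]; continuity

lemma hasDerivAt_Phi (x : ℝ) : HasDerivAt Phi (gaussianPDFReal 0 1 x) x := by
  have hint : Integrable (gaussianPDFReal 0 1) := integrable_gaussianPDFReal 0 1
  have key : Phi = fun y => Phi 0 + ∫ t in (0:ℝ)..y, gaussianPDFReal 0 1 t := by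
    funext y
    rw [← intervalIntegral.integral_Iic_sub_Iic hint.integrableOn hint.integrableOn]
    unfold Phi; ring
  have h := (intervalIntegral.integral_hasDerivAt_right
    (hint.intervalIntegrable (a := 0) (b := x))
    gauss_cont.stronglyMeasurable.stronglyMeasurableAtFilter
    gauss_cont.continuousAt).const_add (Phi 0)
  rw [key]; exact h

lemma Phi_strictMono : StrictMono Phi := by
  apply strictMono_of_deriv_pos
  intro x
  rw [(hasDerivAt_Phi x).deriv]
  exact gaussianPDFReal_pos 0 1 x one_ne_zero

lemma Phi_neg (x : ℝ) : Phi (-x) = 1 - Phi x := by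
  have hint : Integrable (gaussianPDFReal 0 1) := integrable_gaussianPDFReal 0 1
  have heven : ∀ t : ℝ, gaussianPDFReal 0 1 (-t) = gaussianPDFReal 0 1 t := by
    intro t; simp only [gaussianPDFReal]; ring_nf
  have h1 : Phi (-x) = ∫ t in Set.Ioi x, gaussianPDFReal 0 1 t := by
    unfold Phi
    have h := integral_comp_neg_Iic (-x) (gaussianPDFReal 0 1)
    rw [neg_neg] at h
    rw [← h]
    simp only [heven]
  have h2 := intervalIntegral.integral_Iic_add_Ioi (b := x) hint.integrableOn hint.integrableOn
  rw [integral_gaussianPDFReal_eq_one 0 one_ne_zero] at h2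
  unfold Phi at *
  linarith

lemma gauss_lt {a b : ℝ} (h : b ^ 2 < a ^ 2) :
    gaussianPDFReal 0 1 a < gaussianPDFReal 0 1 b := by
  simp only [gaussianPDFReal]
  have hpi := Real.pi_pos
  apply mul_lt_mul_of_pos_left ?_ (by positivity)
  apply Real.exp_lt_exp.mpr
  push_cast
  nlinarith

lemma Phi_continuous : Continuous Phi :=
  continuous_iff_continuousAt.mpr fun x => (hasDerivAt_Phi x).continuousAt


/-- the worst-case regret `g` of the threshold rule `1{wᵀY ≥ c}` is strictly
decreasing on `[0, c*]` and strictly increasing on `[c*, ∞)`, where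
`c* = s² − s·Φ⁻¹(Ī/(Ī−I̲)) > 0`. -/
theorem threshold_regret_monotonicity (Ibar Ilow s q cstar : ℝ)
    (hIbar : 0 < Ibar) (hIlow : Ilow < 0) (hsum : 0 < Ibar + Ilow) (hs : 0 < s)
    (hlt : Ibar / (Ibar - Ilow) < Phi s)
    (hq : Phi q = Ibar / (Ibar - Ilow))
    (hc : cstar = s ^ 2 - s * q) :
    0 < cstar ∧
    StrictAntiOn (fun c =>
      (1 / 2) * max (Ibar * Phi ((-s ^ 2 + c) / s)) (-Ilow * Phi ((s ^ 2 - c) / s))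
      + (1 / 2) * max (-Ilow * Phi ((s ^ 2 + c) / s)) (Ibar * Phi ((-s ^ 2 - c) / s)))
      (Set.Icc 0 cstar) ∧
    StrictMonoOn (fun c =>
      (1 / 2) * max (Ibar * Phi ((-s ^ 2 + c) / s)) (-Ilow * Phi ((s ^ 2 - c) / s))
      + (1 / 2) * max (-Ilow * Phi ((s ^ 2 + c) / s)) (Ibar * Phi ((-s ^ 2 - c) / s)))
      (Set.Ici cstar) := by

  have hden : (0:ℝ) < Ibar - Ilow := by linarith
  have hqs : q < s := Phi_strictMono.lt_iff_lt.mp (by rw [hq]; exact hlt)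
  have hcpos : 0 < cstar := by rw [hc]; nlinarith
  -- key algebraic fact: (Ibar - Ilow) * Phi q = Ibar
  have hPhiq : (Ibar - Ilow) * Phi q = Ibar := by
    rw [hq]; field_simp
  -- mirror identity
  have hmir : ∀ c : ℝ, Phi ((s ^ 2 - c) / s) = 1 - Phi ((-s ^ 2 + c) / s) := by
    intro c
    rw [show (s ^ 2 - c) / s = -((-s ^ 2 + c) / s) by ring, Phi_neg]
  have hmir2 : ∀ c : ℝ, Phi ((-s ^ 2 - c) / s) = 1 - Phi ((s ^ 2 + c) / s) := by
    intro c
    rw [show (-s ^ 2 - c) / s = -((s ^ 2 + c) / s) by ring, Phi_neg]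
  have hPhinegq : Phi (-q) = 1 - Phi q := Phi_neg q
  -- max lemma 1 (c ≤ cstar)
  have hmax1_le : ∀ c ≤ cstar,
      max (Ibar * Phi ((-s ^ 2 + c) / s)) (-Ilow * Phi ((s ^ 2 - c) / s))
        = -Ilow * Phi ((s ^ 2 - c) / s) := by
    intro c hcc
    apply max_eq_right
    have hu : Phi ((-s ^ 2 + c) / s) ≤ Phi (-q) := by
      apply Phi_strictMono.monotone
      rw [div_le_iff₀ hs]
      nlinarith [hc ▸ hcc]
    rw [hPhinegq] at hu
    rw [hmir c]
    nlinarith [hu, hPhiq]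
  -- max lemma 1 (cstar ≤ c)
  have hmax1_ge : ∀ c, cstar ≤ c →
      max (Ibar * Phi ((-s ^ 2 + c) / s)) (-Ilow * Phi ((s ^ 2 - c) / s))
        = Ibar * Phi ((-s ^ 2 + c) / s) := by
    intro c hcc
    apply max_eq_left
    have hu : Phi (-q) ≤ Phi ((-s ^ 2 + c) / s) := by
      apply Phi_strictMono.monotone
      rw [le_div_iff₀ hs]
      nlinarith [hc ▸ hcc]
    rw [hPhinegq] at hu
    rw [hmir c]
    nlinarith [hu, hPhiq]
  -- max lemma 2 (0 ≤ c)
  have hmax2 : ∀ c, (0:ℝ) ≤ c →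
      max (-Ilow * Phi ((s ^ 2 + c) / s)) (Ibar * Phi ((-s ^ 2 - c) / s))
        = -Ilow * Phi ((s ^ 2 + c) / s) := by
    intro c hc0
    apply max_eq_left
    have hr : Phi q ≤ Phi ((s ^ 2 + c) / s) := by
      apply Phi_strictMono.monotone
      rw [le_div_iff₀ hs]
      nlinarith
    rw [hmir2 c]
    nlinarith [hr, hPhiq]
  -- strict anti of the symmetric sum
  have hanti_h : StrictAntiOn (fun c => Phi ((s ^ 2 - c) / s) + Phi ((s ^ 2 + c) / s))
      (Set.Icc 0 cstar) := by
    apply strictAntiOn_of_deriv_neg (convex_Icc 0 cstar)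
    · apply ContinuousOn.add <;>
      · apply Continuous.continuousOn
        exact Phi_continuous.comp (by continuity)
    · intro c hc
      rw [interior_Icc] at hc
      have hd1 : HasDerivAt (fun c : ℝ => Phi ((s ^ 2 - c) / s))
          (gaussianPDFReal 0 1 ((s ^ 2 - c) / s) * (-1 / s)) c := by
        have hin : HasDerivAt (fun c : ℝ => (s ^ 2 - c) / s) (-1 / s) c := by
          simpa using ((hasDerivAt_id c).const_sub (s ^ 2)).div_const s
        exact (hasDerivAt_Phi _).comp c hin
      have hd2 : HasDerivAt (fun c : ℝ => Phi ((s ^ 2 + c) / s))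
          (gaussianPDFReal 0 1 ((s ^ 2 + c) / s) * (1 / s)) c := by
        have hin : HasDerivAt (fun c : ℝ => (s ^ 2 + c) / s) (1 / s) c := by
          simpa using ((hasDerivAt_id c).const_add (s ^ 2)).div_const s
        exact (hasDerivAt_Phi _).comp c hin
      rw [show deriv (fun c => Phi ((s ^ 2 - c) / s) + Phi ((s ^ 2 + c) / s)) c = _ from (hd1.add hd2).deriv]
      have hs2 : (0:ℝ) < s ^ 2 := by positivity
      have hsq : ((s ^ 2 - c) / s) ^ 2 < ((s ^ 2 + c) / s) ^ 2 := by
        rw [div_pow, div_pow, div_lt_div_iff₀ hs2 hs2]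
        nlinarith [mul_pos (mul_pos (mul_pos (mul_pos hs hs) hs) hs) hc.1]
      have hlt' := gauss_lt hsq
      have h1s : (0:ℝ) < 1 / s := by positivity
      rw [show gaussianPDFReal 0 1 ((s ^ 2 - c) / s) * (-1 / s)
            + gaussianPDFReal 0 1 ((s ^ 2 + c) / s) * (1 / s)
          = -((gaussianPDFReal 0 1 ((s ^ 2 - c) / s)
              - gaussianPDFReal 0 1 ((s ^ 2 + c) / s)) * (1 / s)) by ring]
      have := mul_pos (sub_pos.mpr hlt') h1s
      linarith
  refine ⟨hcpos, ?_, ?_⟩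
  · intro x hx y hy hxy
    simp only
    rw [hmax1_le x hx.2, hmax1_le y hy.2, hmax2 x hx.1, hmax2 y hy.1]
    have h := hanti_h hx hy hxy
    simp only at h
    linarith [mul_lt_mul_of_pos_left h (by linarith : (0:ℝ) < -Ilow)]
  · intro x hx y hy hxy
    simp only
    rw [Set.mem_Ici] at hx hy
    rw [hmax1_ge x hx, hmax1_ge y hy, hmax2 x (by linarith), hmax2 y (by linarith)]
    have hA : Phi ((-s ^ 2 + x) / s) < Phi ((-s ^ 2 + y) / s) := by
      apply Phi_strictMono
      rw [div_lt_div_iff₀ hs hs]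
      nlinarith
    have hB : Phi ((s ^ 2 + x) / s) < Phi ((s ^ 2 + y) / s) := by
      apply Phi_strictMono
      rw [div_lt_div_iff₀ hs hs]
      nlinarith
    linarith [mul_lt_mul_of_pos_left hA hIbar,
      mul_lt_mul_of_pos_left hB (by linarith : (0:ℝ) < -Ilow)]
end

section
/- Let Σ be an n×n positive definite matrix (n > 1), μ̄ ≠ 0, and μ̇ ≠ 0 with μ̇ᵀΣ⁻¹μ̄ = 0. For t ∈ ℝ set w_t = Σ⁻¹(tμ̄ + (1−t)μ̇). Let s* ∈ (0,1) and define t* = 1/(1 + √((1−s*)/s* · (μ̄ᵀΣ⁻¹μ̄)/(μ̇ᵀΣ⁻¹μ̇))). Then (w_{t*}ᵀμ̄)² / (w_{t*}ᵀΣw_{t*}) = s* · μ̄ᵀΣ⁻¹μ̄ and w_{t*}ᵀμ̄ > 0. -/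
/-!
With `a = μ̄ᵀΣ⁻¹μ̄` and `b = μ̇ᵀΣ⁻¹μ̇`, the `Σ⁻¹`-orthogonality of `μ̄` and `μ̇` gives
`w_tᵀμ̄ = t a` and, by Pythagoras for the form `Σ⁻¹`, `w_tᵀΣw_t = t² a + (1 - t)² b`.
The threshold `t* = 1 / (1 + r)` has `1 - t* = r t*` with `r² b = (1 - s*) / s* · a`,
so the denominator collapses to `t*² a / s*`.
-/

open Matrix

namespace Matrix

variable {ι α : Type*} [Fintype ι]

theorem IsSymm.dotProduct_mulVec_comm [CommSemiring α] {M : Matrix ι ι α} (hM : M.IsSymm)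
    (u v : ι → α) : u ⬝ᵥ (M *ᵥ v) = v ⬝ᵥ (M *ᵥ u) := by
  rw [dotProduct_mulVec, ← mulVec_transpose, hM.eq, dotProduct_comm]

theorem IsSymm.dotProduct_mulVec_add_of_orthogonal [CommSemiring α] {M : Matrix ι ι α}
    (hM : M.IsSymm) {u v : ι → α} (huv : u ⬝ᵥ (M *ᵥ v) = 0) (x y : α) :
    (x • u + y • v) ⬝ᵥ (M *ᵥ (x • u + y • v)) =
      x ^ 2 * (u ⬝ᵥ (M *ᵥ u)) + y ^ 2 * (v ⬝ᵥ (M *ᵥ v)) := by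
  have hvu : v ⬝ᵥ (M *ᵥ u) = 0 := hM.dotProduct_mulVec_comm v u ▸ huv
  simp only [mulVec_add, mulVec_smul, add_dotProduct, dotProduct_add, smul_dotProduct,
    dotProduct_smul, huv, hvu, smul_eq_mul]
  ring

theorem dotProduct_mulVec_nonsing_inv_mulVec [DecidableEq ι] [CommRing α] {S : Matrix ι ι α}
    (hS : IsUnit S.det) (v : ι → α) :
    (S⁻¹ *ᵥ v) ⬝ᵥ (S *ᵥ (S⁻¹ *ᵥ v)) = (S⁻¹ *ᵥ v) ⬝ᵥ v := by
  rw [mulVec_mulVec, mul_nonsing_inv S hS, one_mulVec]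

end Matrix

theorem mul_sq_div_eq_mul_of_eq_one_div_one_add {a b s r t : ℝ} (hs : 0 < s) (hr : 0 ≤ r)
    (hrb : r ^ 2 * b = (1 - s) / s * a) (ht : t = 1 / (1 + r)) :
    (t * a) ^ 2 / (t ^ 2 * a + (1 - t) ^ 2 * b) = s * a := by
  have ht0 : t ≠ 0 := by rw [ht]; positivity
  have h1t : 1 - t = r * t := by rw [ht]; field_simp; ring
  have hden : t ^ 2 * a + (1 - t) ^ 2 * b = t ^ 2 * a / s := by
    rw [h1t, mul_pow, mul_right_comm (r ^ 2), hrb]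
    field_simp
    ring
  rw [hden]
  field_simp

theorem purified_threshold_rule_general {n : ℕ}
    (S : Matrix (Fin n) (Fin n) ℝ) (hS : S.PosDef)
    (μbar μdot : Fin n → ℝ) (hμbar : μbar ≠ 0) (hμdot : μdot ≠ 0)
    (horth : μdot ⬝ᵥ (S⁻¹ *ᵥ μbar) = 0)
    (sstar : ℝ) (hsstar : sstar ∈ Set.Ioo (0:ℝ) 1)
    (tstar : ℝ)
    (ht : tstar = 1 / (1 + Real.sqrt ((1 - sstar) / sstar
      * ((μbar ⬝ᵥ (S⁻¹ *ᵥ μbar)) / (μdot ⬝ᵥ (S⁻¹ *ᵥ μdot))))))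
    (w : Fin n → ℝ) (hw : w = S⁻¹ *ᵥ (tstar • μbar + (1 - tstar) • μdot)) :
    (w ⬝ᵥ μbar) ^ 2 / (w ⬝ᵥ (S *ᵥ w)) = sstar * (μbar ⬝ᵥ (S⁻¹ *ᵥ μbar)) ∧
    0 < w ⬝ᵥ μbar := by
  obtain ⟨hs0, hs1⟩ := hsstar
  set a := μbar ⬝ᵥ (S⁻¹ *ᵥ μbar)
  set b := μdot ⬝ᵥ (S⁻¹ *ᵥ μdot)
  set r := √((1 - sstar) / sstar * (a / b)) with hr
  have hP : (S⁻¹).IsSymm := isHermitian_iff_isSymm.mp hS.inv.isHermitian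
  have horth' : μbar ⬝ᵥ (S⁻¹ *ᵥ μdot) = 0 := hP.dotProduct_mulVec_comm _ _ ▸ horth
  have ha : 0 < a := by simpa using hS.inv.dotProduct_mulVec_pos hμbar
  have hb : 0 < b := by simpa using hS.inv.dotProduct_mulVec_pos hμdot
  have hrb : r ^ 2 * b = (1 - sstar) / sstar * a := by
    rw [hr, Real.sq_sqrt (by have := sub_pos.mpr hs1; positivity)]
    field_simp
  have hwμ : w ⬝ᵥ μbar = tstar * a := by
    rw [hw, dotProduct_comm]
    simp only [mulVec_add, mulVec_smul, dotProduct_add, dotProduct_smul, horth', smul_eq_mul]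
    ring
  have hwSw : w ⬝ᵥ (S *ᵥ w) = tstar ^ 2 * a + (1 - tstar) ^ 2 * b := by
    rw [hw, dotProduct_mulVec_nonsing_inv_mulVec (S.isUnit_iff_isUnit_det.mp hS.isUnit),
      dotProduct_comm, hP.dotProduct_mulVec_add_of_orthogonal horth']
  refine ⟨?_, ?_⟩
  · rw [hwμ, hwSw]
    exact mul_sq_div_eq_mul_of_eq_one_div_one_add hs0 (Real.sqrt_nonneg _) hrb ht
  · rw [hwμ, ht]
    positivity

/-- with `w_t = Σ⁻¹(tμ̄ + (1−t)μ̇)`, `μ̇ᵀΣ⁻¹μ̄ = 0`, and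
`t* = 1/(1 + √((1−s*)/s* · (μ̄ᵀΣ⁻¹μ̄)/(μ̇ᵀΣ⁻¹μ̇)))`, one has
`(w_{t*}ᵀμ̄)²/(w_{t*}ᵀΣw_{t*}) = s*·μ̄ᵀΣ⁻¹μ̄` and `w_{t*}ᵀμ̄ > 0`. -/
theorem purified_threshold_rule {n : ℕ} (hn : 1 < n)
    (S : Matrix (Fin n) (Fin n) ℝ) (hS : S.PosDef)
    (μbar μdot : Fin n → ℝ) (hμbar : μbar ≠ 0) (hμdot : μdot ≠ 0)
    (horth : μdot ⬝ᵥ (S⁻¹ *ᵥ μbar) = 0)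
    (sstar : ℝ) (hsstar : sstar ∈ Set.Ioo (0:ℝ) 1)
    (tstar : ℝ)
    (ht : tstar = 1 / (1 + Real.sqrt ((1 - sstar) / sstar
      * ((μbar ⬝ᵥ (S⁻¹ *ᵥ μbar)) / (μdot ⬝ᵥ (S⁻¹ *ᵥ μdot))))))
    (w : Fin n → ℝ) (hw : w = S⁻¹ *ᵥ (tstar • μbar + (1 - tstar) • μdot)) :
    (w ⬝ᵥ μbar) ^ 2 / (w ⬝ᵥ (S *ᵥ w)) = sstar * (μbar ⬝ᵥ (S⁻¹ *ᵥ μbar)) ∧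
    0 < w ⬝ᵥ μbar :=
  purified_threshold_rule_general S hS μbar μdot hμbar hμdot horth sstar hsstar tstar ht w hw
end

section
/- Let Ī > 0 > I̲ with Ī + I̲ > 0, and let f₁, f₂ > 0 be reals (likelihoods). Define V : [0,1] → ℝ by V(a) = f₁·max{Ī(1−a), −I̲·a} + f₂·max{Ī·a, −I̲(1−a)}. Then: (i) if f₂ > f₁, V attains its unique minimum over [0,1] at a = −I̲/(Ī − I̲); (ii) if f₂ < f₁, V attains its unique minimum at a = Ī/(Ī − I̲); (iii) if f₂ = f₁, V is minimized exactly on the interval [−I̲/(Ī − I̲), Ī/(Ī − I̲)]. -/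
/-- minimizers of the worst-case posterior expected regret
`V(a) = f₁·max{Ī(1−a), −I̲a} + f₂·max{Īa, −I̲(1−a)}` over `a ∈ [0,1]`. -/
theorem per_minimizers (Ibar Ilow f₁ f₂ : ℝ)
    (hIbar : 0 < Ibar) (hIlow : Ilow < 0) (hsum : 0 < Ibar + Ilow)
    (hf₁ : 0 < f₁) (hf₂ : 0 < f₂)
    (V : ℝ → ℝ)
    (hV : ∀ a, V a = f₁ * max (Ibar * (1 - a)) (-Ilow * a)
      + f₂ * max (Ibar * a) (-Ilow * (1 - a))) :
    (f₁ < f₂ → ∀ a ∈ Set.Icc (0:ℝ) 1, a ≠ -Ilow / (Ibar - Ilow) →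
      V (-Ilow / (Ibar - Ilow)) < V a) ∧
    (f₂ < f₁ → ∀ a ∈ Set.Icc (0:ℝ) 1, a ≠ Ibar / (Ibar - Ilow) →
      V (Ibar / (Ibar - Ilow)) < V a) ∧
    (f₂ = f₁ →
      (∀ a ∈ Set.Icc (-Ilow / (Ibar - Ilow)) (Ibar / (Ibar - Ilow)),
        V a = V (-Ilow / (Ibar - Ilow))) ∧
      (∀ a ∈ Set.Icc (0:ℝ) 1, a ∉ Set.Icc (-Ilow / (Ibar - Ilow)) (Ibar / (Ibar - Ilow)) →
        V (-Ilow / (Ibar - Ilow)) < V a)) := by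
  have hD : (0:ℝ) < Ibar - Ilow := by linarith
  set a₁ := -Ilow / (Ibar - Ilow) with ha₁def
  set a₂ := Ibar / (Ibar - Ilow) with ha₂def
  have h1 : a₁ * Ibar - a₁ * Ilow = -Ilow := by
    rw [ha₁def]; field_simp; ring
  have h2 : a₂ * Ibar - a₂ * Ilow = Ibar := by
    rw [ha₂def]; field_simp
  -- evaluate V at a₁
  have hm1 : max (Ibar * (1 - a₁)) (-Ilow * a₁) = Ibar * (1 - a₁) :=
    max_eq_left (by linarith [h1])
  have hm2 : max (Ibar * a₁) (-Ilow * (1 - a₁)) = Ibar * a₁ :=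
    max_eq_left (by linarith [h1])
  have hVa₁ : V a₁ = f₁ * (Ibar * (1 - a₁)) + f₂ * (Ibar * a₁) := by
    rw [hV, hm1, hm2]
  -- evaluate V at a₂
  have hm3 : max (Ibar * (1 - a₂)) (-Ilow * a₂) = -Ilow * a₂ :=
    max_eq_right (by linarith [h2])
  have hm4 : max (Ibar * a₂) (-Ilow * (1 - a₂)) = Ibar * a₂ :=
    max_eq_left (by linarith [h2])
  have hVa₂ : V a₂ = f₁ * (-Ilow * a₂) + f₂ * (Ibar * a₂) := by
    rw [hV, hm3, hm4]
  have e1 : Ibar * a₁ = -Ilow * (1 - a₁) := by linarith [h1]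
  have e2 : Ibar * (1 - a₂) = -Ilow * a₂ := by linarith [h2]
  refine ⟨?_, ?_, ?_⟩
  · intro hf a ha hne
    obtain ⟨ha0, hA1⟩ := ha
    rw [hV a, hVa₁]
    have B1 := mul_le_mul_of_nonneg_left (le_max_left (Ibar * (1 - a)) (-Ilow * a)) hf₁.le
    have B2 := mul_le_mul_of_nonneg_left (le_max_left (Ibar * a) (-Ilow * (1 - a))) hf₂.le
    have B2' := mul_le_mul_of_nonneg_left (le_max_right (Ibar * a) (-Ilow * (1 - a))) hf₂.le
    have E1 : f₂ * (Ibar * a₁) = f₂ * (-Ilow * (1 - a₁)) := by rw [e1]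
    rcases lt_or_gt_of_ne hne with h | h
    · have P : 0 < (a₁ - a) * (f₁ * Ibar - f₂ * Ilow) :=
        mul_pos (by linarith)
          (by linarith [mul_pos hf₁ hIbar, mul_neg_of_pos_of_neg hf₂ hIlow])
      linarith [B1, B2', P, E1]
    · have P : 0 < (a - a₁) * ((f₂ - f₁) * Ibar) :=
        mul_pos (by linarith) (mul_pos (by linarith) hIbar)
      linarith [B1, B2, P]
  · intro hf a ha hne
    obtain ⟨ha0, hA1⟩ := ha
    rw [hV a, hVa₂]
    have B1 := mul_le_mul_of_nonneg_left (le_max_left (Ibar * (1 - a)) (-Ilow * a)) hf₁.le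
    have B1' := mul_le_mul_of_nonneg_left (le_max_right (Ibar * (1 - a)) (-Ilow * a)) hf₁.le
    have B2 := mul_le_mul_of_nonneg_left (le_max_left (Ibar * a) (-Ilow * (1 - a))) hf₂.le
    have E2 : f₁ * (-Ilow * a₂) = f₁ * (Ibar * (1 - a₂)) := by rw [e2]
    rcases lt_or_gt_of_ne hne with h | h
    · have P : 0 < (a₂ - a) * ((f₁ - f₂) * Ibar) :=
        mul_pos (by linarith) (mul_pos (by linarith) hIbar)
      linarith [B1, B2, P, E2]
    · have P : 0 < (a - a₂) * (f₂ * Ibar - f₁ * Ilow) :=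
        mul_pos (by linarith)
          (by linarith [mul_pos hf₂ hIbar, mul_neg_of_pos_of_neg hf₁ hIlow])
      linarith [B1', B2, P]
  · intro hf
    subst hf
    constructor
    · intro a ha
      obtain ⟨hA1, hA2⟩ := ha
      have hm1a : max (Ibar * (1 - a)) (-Ilow * a) = Ibar * (1 - a) := by
        apply max_eq_left
        linarith [mul_le_mul_of_nonneg_right hA2 hD.le, h2]
      have hm2a : max (Ibar * a) (-Ilow * (1 - a)) = Ibar * a := by
        apply max_eq_left
        linarith [mul_le_mul_of_nonneg_right hA1 hD.le, h1]
      rw [hV a, hm1a, hm2a, hVa₁]; ring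
    · intro a ha hnot
      obtain ⟨ha0, hA1⟩ := ha
      rw [Set.mem_Icc, not_and_or, not_le, not_le] at hnot
      rw [hV a, hVa₁]
      have B1 := mul_le_mul_of_nonneg_left (le_max_left (Ibar * (1 - a)) (-Ilow * a)) hf₂.le
      have B1' := mul_le_mul_of_nonneg_left (le_max_right (Ibar * (1 - a)) (-Ilow * a)) hf₂.le
      have B2 := mul_le_mul_of_nonneg_left (le_max_left (Ibar * a) (-Ilow * (1 - a))) hf₂.le
      have B2' := mul_le_mul_of_nonneg_left (le_max_right (Ibar * a) (-Ilow * (1 - a))) hf₂.le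
      have hmul : 0 < f₂ * Ibar - f₂ * Ilow := by linarith [mul_pos hf₂ hD]
      rcases hnot with h | h
      · have H1 : f₂ * (a₁ * Ibar - a₁ * Ilow) = f₂ * (-Ilow) := by rw [h1]
        have P : 0 < (a₁ - a) * (f₂ * Ibar - f₂ * Ilow) := mul_pos (by linarith) hmul
        linarith [B1, B2', P, H1]
      · have H2 : f₂ * (a₂ * Ibar - a₂ * Ilow) = f₂ * Ibar := by rw [h2]
        have P : 0 < (a - a₂) * (f₂ * Ibar - f₂ * Ilow) := mul_pos (by linarith) hmul
        linarith [B1', B2, P, H2]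
end

section
/- Let σ > 0 and let Φ be the standard normal CDF. Define h(μ) = μ/(1 − 2Φ(−μ/σ)) for μ > 0. Then h is (weakly) increasing on (0, ∞) and lim_{μ→0⁺} h(μ) = σ·√(π/2). -/
open MeasureTheory ProbabilityTheory Set Filter Topology intervalIntegral

section RunningMean

variable {f : ℝ → ℝ}

theorem antitoneOn_intervalIntegral_div (hf : AntitoneOn f (Ici 0)) :
    AntitoneOn (fun a => (∫ t in 0..a, f t) / a) (Ioi 0) := by
  intro a ha b hb hab
  simp only [mem_Ioi] at ha hb
  have hint : ∀ {x y}, 0 ≤ x → x ≤ y → IntervalIntegrable f volume x y := fun hx hxy =>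
    (hf.mono fun t ht => by rw [uIcc_of_le hxy] at ht; exact hx.trans ht.1).intervalIntegrable
  have hsplit : (∫ t in 0..a, f t) + (∫ t in a..b, f t) = ∫ t in 0..b, f t :=
    integral_add_adjacent_intervals (hint le_rfl ha.le) (hint ha.le hab)
  have hlow : a * f a ≤ ∫ t in 0..a, f t := by
    simpa [mul_comm] using integral_mono_on ha.le intervalIntegrable_const (hint le_rfl ha.le)
      fun t ht => hf ht.1 (ha.le : a ∈ Ici 0) ht.2
  have hupp : (∫ t in a..b, f t) ≤ (b - a) * f a := by
    simpa [mul_comm] using integral_mono_on hab (hint ha.le hab) intervalIntegrable_const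
      fun t ht => hf (ha.le : a ∈ Ici 0) (ha.le.trans ht.1) ht.1
  rw [div_le_div_iff₀ hb ha]
  nlinarith [mul_le_mul_of_nonneg_left hupp ha.le, mul_le_mul_of_nonneg_left hlow (sub_nonneg.2 hab)]

theorem tendsto_intervalIntegral_div_nhdsNE (hmeas : StronglyMeasurableAtFilter f (𝓝 0))
    (hf : ContinuousAt f 0) :
    Tendsto (fun a => (∫ t in 0..a, f t) / a) (𝓝[≠] 0) (𝓝 (f 0)) := by
  have hderiv := integral_hasDerivAt_right IntervalIntegrable.refl hmeas hf
  refine (hasDerivAt_iff_tendsto_slope.mp hderiv).congr fun a => ?_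
  simp [slope_def_field]

end RunningMean

theorem gaussianPDFReal_zero_neg (v : NNReal) (x : ℝ) :
    gaussianPDFReal 0 v (-x) = gaussianPDFReal 0 v x := by
  simp [gaussianPDFReal]

theorem continuous_gaussianPDFReal (μ : ℝ) (v : NNReal) : Continuous (gaussianPDFReal μ v) := by
  rw [gaussianPDFReal_def]
  fun_prop

theorem antitoneOn_gaussianPDFReal (μ : ℝ) (v : NNReal) :
    AntitoneOn (gaussianPDFReal μ v) (Ici μ) := by
  intro s hs t ht hst
  simp only [mem_Ici] at hs ht
  simp only [gaussianPDFReal]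
  gcongr

theorem inv_two_mul_gaussianPDFReal_zero : (2 * gaussianPDFReal 0 1 0)⁻¹ = √(Real.pi / 2) := by
  have hsqrt : √(2 * Real.pi) = 2 * √(Real.pi / 2) := by
    rw [show 2 * Real.pi = 2 ^ 2 * (Real.pi / 2) by ring, Real.sqrt_mul (by positivity),
      Real.sqrt_sq zero_le_two]
  have hφ0 : gaussianPDFReal 0 1 0 = (√(2 * Real.pi))⁻¹ := by simp [gaussianPDFReal]
  rw [hφ0, hsqrt]
  field_simp

theorem Phi_zero : Phi 0 = 1 / 2 := by
  have hint := integrable_gaussianPDFReal 0 1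
  have htotal : Phi 0 + ∫ x in Ioi 0, gaussianPDFReal 0 1 x = 1 := by
    rw [Phi, integral_Iic_add_Ioi hint.integrableOn hint.integrableOn,
      integral_gaussianPDFReal_eq_one 0 one_ne_zero]
  have hsymm : Phi 0 = ∫ x in Ioi 0, gaussianPDFReal 0 1 x := by
    rw [Phi]
    simpa [gaussianPDFReal_zero_neg] using integral_comp_neg_Iic 0 (gaussianPDFReal 0 1)
  linarith

theorem one_sub_two_mul_Phi_neg (a : ℝ) :
    1 - 2 * Phi (-a) = 2 * ∫ t in 0..a, gaussianPDFReal 0 1 t := by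
  have hint := integrable_gaussianPDFReal 0 1
  have hdiff : Phi (-a) - Phi 0 = ∫ t in 0..(-a), gaussianPDFReal 0 1 t :=
    integral_Iic_sub_Iic hint.integrableOn hint.integrableOn
  have hsymm : (∫ t in 0..(-a), gaussianPDFReal 0 1 t) = -∫ t in 0..a, gaussianPDFReal 0 1 t := by
    have hneg := integral_comp_neg (a := 0) (b := a) (gaussianPDFReal 0 1)
    simp only [gaussianPDFReal_zero_neg, neg_zero] at hneg
    rw [integral_symm, hneg]
  rw [Phi_zero] at hdiff
  linarith

/-- `h(μ) = μ/(1 − 2Φ(−μ/σ))` is weakly increasing on `(0, ∞)` and tends to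
`σ√(π/2)` as `μ → 0⁺`. -/
theorem h_monotone_and_limit (σ : ℝ) (hσ : 0 < σ)
    (h : ℝ → ℝ) (hh : ∀ μ, h μ = μ / (1 - 2 * Phi (-μ / σ))) :
    MonotoneOn h (Set.Ioi 0) ∧
    Filter.Tendsto h (nhdsWithin 0 (Set.Ioi 0)) (nhds (σ * Real.sqrt (Real.pi / 2))) := by
  set A : ℝ → ℝ := fun a => (∫ t in 0..a, gaussianPDFReal 0 1 t) / a with hA
  have hA_pos : ∀ a, 0 < a → 0 < A a := fun a ha =>
    div_pos (intervalIntegral_pos_of_pos_on (integrable_gaussianPDFReal 0 1).intervalIntegrable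
      (fun x _ => gaussianPDFReal_pos 0 1 x one_ne_zero) ha) ha
  have hh' : ∀ μ, 0 < μ → h μ = σ / (2 * A (μ / σ)) := fun μ hμ => by
    rw [hh, neg_div, one_sub_two_mul_Phi_neg, hA]
    field_simp
  have hA_lim : Tendsto (fun μ => A (μ / σ)) (𝓝[>] 0) (𝓝 (gaussianPDFReal 0 1 0)) := by
    have hmean := tendsto_intervalIntegral_div_nhdsNE
      (stronglyMeasurable_gaussianPDFReal 0 1).stronglyMeasurableAtFilter
      (continuous_gaussianPDFReal 0 1).continuousAt
    refine (hmean.mono_left (nhdsGT_le_nhdsNE 0)).comp (tendsto_nhdsWithin_iff.2 ⟨?_, ?_⟩)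
    · exact ((continuous_id.div_const σ).tendsto' 0 0 (zero_div σ)).mono_left nhdsWithin_le_nhds
    · filter_upwards [self_mem_nhdsWithin] with μ (hμ : 0 < μ) using div_pos hμ hσ
  constructor
  · intro μ₁ hμ₁ μ₂ hμ₂ hμ
    rw [hh' μ₁ hμ₁, hh' μ₂ hμ₂]
    have hA_anti := antitoneOn_intervalIntegral_div (antitoneOn_gaussianPDFReal 0 1)
      (div_pos hμ₁ hσ) (div_pos hμ₂ hσ) (div_le_div_of_nonneg_right hμ hσ.le)
    exact div_le_div_of_nonneg_left hσ.le
      (mul_pos two_pos (hA_pos _ (div_pos hμ₂ hσ))) (by linarith)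
  · have hlim := (hA_lim.const_mul 2).inv₀
      (mul_pos two_pos (gaussianPDFReal_pos 0 1 0 one_ne_zero)).ne' |>.const_mul σ
    rw [inv_two_mul_gaussianPDFReal_zero] at hlim
    refine hlim.congr' ?_
    filter_upwards [self_mem_nhdsWithin] with μ (hμ : 0 < μ)
    rw [hh' μ hμ, div_eq_mul_inv σ]
end
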